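/- OLO-to-policy regret conversion: suppose an OLO strategy guarantees, for any sequence of reward vectors in [−M, M]^A, regret at most 2M·B_T against the best fixed action. If policies π'_t are obtained by running such a strategy at each state–stage pair on the advantage functions A_h^{π'_τ, r'_τ, P'} of the previously played policies, then for every fixed policy π and all T ≥ 1: ∑_{t=1}^T ( V₁^{π, r'_t, P'}(s₁) − V₁^{π'_t, r'_t, P'}(s₁) ) ≤ 2 M H² B_T. -/

import Mathlib

open Finset

variable {S A : Type*}

/-- Auxiliary backward value recursion: `valAux P r π k h s` is the value at stage `h`,
state `s`, with `k` stages remaining (including `h`). -/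
noncomputable def valAux [Fintype S] [Fintype A] (P : ℕ → S → A → S → ℝ)
    (r : ℕ → S → A → ℝ) (π : ℕ → S → A → ℝ) : ℕ → ℕ → S → ℝ
  | 0, _, _ => 0
  | k + 1, h, s => ∑ a, π h s a *
      (r h s a + ∑ s', P h s a s' * valAux P r π k (h + 1) s')

/-- Value function `V_h^{π,r,P}(s)` in an `H`-horizon MDP (stages `1,…,H`). -/
noncomputable def Val [Fintype S] [Fintype A] (H : ℕ) (P : ℕ → S → A → S → ℝ)
    (r : ℕ → S → A → ℝ) (π : ℕ → S → A → ℝ) (h : ℕ) (s : S) : ℝ :=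
  valAux P r π (H + 1 - h) h s

/-- Q-value function `Q_h^{π,r,P}(s,a)`; satisfies Bellman's equation, with
`Val H P r π (H+1) = 0`, so `Q_H = r_H`. -/
noncomputable def Qval [Fintype S] [Fintype A] (H : ℕ) (P : ℕ → S → A → S → ℝ)
    (r : ℕ → S → A → ℝ) (π : ℕ → S → A → ℝ) (h : ℕ) (s : S) (a : A) : ℝ :=
  r h s a + ∑ s', P h s a s' * Val H P r π (h + 1) s'

/-- State distribution `μ_h^{π,P,s₁}` at stage `h` induced by policy `π` and kernels `P`
from initial state `s₁`. -/
noncomputable def occup [Fintype S] [Fintype A] [DecidableEq S]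
    (P : ℕ → S → A → S → ℝ) (π : ℕ → S → A → ℝ) (s₁ : S) : ℕ → S → ℝ
  | 0, _ => 0
  | 1, s => if s = s₁ then 1 else 0
  | h + 2, s' => ∑ s, ∑ a, occup P π s₁ (h + 1) s * π (h + 1) s a * P (h + 1) s a s'

/-!
By the performance-difference lemma, `V₁^π − V₁^{π'_t}` at `s₁` is the expectation, under the
state distributions of `π`, of `∑ₐ π_h(a|s) A_h^{π'_t}(s,a)` summed over the stages `h`.
Summing over `t` and exchanging sums, at each pair `(h, s)` one gets the regret of the OLO
strategy run at `(h, s)` against the mixed comparator `π_h(·|s)`. The advantages are bounded by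
`MH`, and the strategy's own gain `∑ₐ π'_{t,h}(a|s) A_h^{π'_t}(s,a)` vanishes, so this regret is
at most `2MH·B`; averaging over `s` and summing over the `H` stages gives `2MH²B`.
-/

section Simplex

variable {α : Type*} [Fintype α]

lemma sum_mul_le_of_mem_stdSimplex {p f : α → ℝ} {c : ℝ} (hp : p ∈ stdSimplex ℝ α)
    (hf : ∀ a, f a ≤ c) : ∑ a, p a * f a ≤ c :=
  calc ∑ a, p a * f a ≤ ∑ a, p a * c :=
        sum_le_sum fun a _ => mul_le_mul_of_nonneg_left (hf a) (hp.1 a)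
    _ = c := by rw [← sum_mul, hp.2, one_mul]

lemma le_sum_mul_of_mem_stdSimplex {p f : α → ℝ} {c : ℝ} (hp : p ∈ stdSimplex ℝ α)
    (hf : ∀ a, c ≤ f a) : c ≤ ∑ a, p a * f a :=
  calc c = ∑ a, p a * c := by rw [← sum_mul, hp.2, one_mul]
    _ ≤ ∑ a, p a * f a := sum_le_sum fun a _ => mul_le_mul_of_nonneg_left (hf a) (hp.1 a)

lemma sum_mul_sub_const {p : α → ℝ} (hp : ∑ a, p a = 1) (f : α → ℝ) (c : ℝ) :
    ∑ a, p a * (f a - c) = ∑ a, p a * f a - c := by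
  simp only [mul_sub, sum_sub_distrib, ← sum_mul, hp, one_mul]

lemma sum_sum_mul_le_of_mem_stdSimplex {ι : Type*} {I : Finset ι} {p : α → ℝ}
    (hp : p ∈ stdSimplex ℝ α) {g : ι → α → ℝ} {R : ℝ} (hg : ∀ a, ∑ t ∈ I, g t a ≤ R) :
    ∑ t ∈ I, ∑ a, p a * g t a ≤ R := by
  rw [sum_comm]
  simp only [← mul_sum]
  exact sum_mul_le_of_mem_stdSimplex hp hg

end Simplex

section Values

variable [Fintype S] [Fintype A] {H : ℕ} {P : ℕ → S → A → S → ℝ} {r : ℕ → S → A → ℝ}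
  {M : ℝ}

lemma valAux_mem_Icc {π : ℕ → S → A → ℝ} (hP : ∀ h s a, P h s a ∈ stdSimplex ℝ S)
    (hr : ∀ h s a, r h s a ∈ Set.Icc 0 M) (hπ : ∀ h s, π h s ∈ stdSimplex ℝ A) :
    ∀ (k : ℕ) h s, valAux P r π k h s ∈ Set.Icc 0 (k * M)
  | 0, _, _ => by simp [valAux]
  | k + 1, h, s => by
    have hnext (a : A) : ∑ s', P h s a s' * valAux P r π k (h + 1) s' ∈ Set.Icc 0 (k * M) :=
      ⟨le_sum_mul_of_mem_stdSimplex (hP h s a) fun s' => (valAux_mem_Icc hP hr hπ k _ s').1,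
        sum_mul_le_of_mem_stdSimplex (hP h s a) fun s' => (valAux_mem_Icc hP hr hπ k _ s').2⟩
    push_cast
    exact ⟨le_sum_mul_of_mem_stdSimplex (hπ h s) fun a => add_nonneg (hr h s a).1 (hnext a).1,
      sum_mul_le_of_mem_stdSimplex (hπ h s) fun a => by linarith [(hr h s a).2, (hnext a).2]⟩

lemma Val_mem_Icc {π : ℕ → S → A → ℝ} (hP : ∀ h s a, P h s a ∈ stdSimplex ℝ S)
    (hr : ∀ h s a, r h s a ∈ Set.Icc 0 M) (hπ : ∀ h s, π h s ∈ stdSimplex ℝ A) (h : ℕ) (s : S) :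
    Val H P r π h s ∈ Set.Icc 0 ((H + 1 - h : ℕ) * M) :=
  valAux_mem_Icc hP hr hπ _ h s

lemma Qval_mem_Icc {π : ℕ → S → A → ℝ} (hP : ∀ h s a, P h s a ∈ stdSimplex ℝ S)
    (hr : ∀ h s a, r h s a ∈ Set.Icc 0 M) (hπ : ∀ h s, π h s ∈ stdSimplex ℝ A) (h : ℕ) (s : S)
    (a : A) : Qval H P r π h s a ∈ Set.Icc 0 ((H - h + 1 : ℕ) * M) := by
  have hV (s' : S) := Val_mem_Icc (H := H) hP hr hπ (h + 1) s'
  rw [show H + 1 - (h + 1) = H - h by omega] at hV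
  have hnext : ∑ s', P h s a s' * Val H P r π (h + 1) s' ∈ Set.Icc 0 ((H - h : ℕ) * M) :=
    ⟨le_sum_mul_of_mem_stdSimplex (hP h s a) fun s' => (hV s').1,
      sum_mul_le_of_mem_stdSimplex (hP h s a) fun s' => (hV s').2⟩
  rw [Qval]
  push_cast
  exact ⟨add_nonneg (hr h s a).1 hnext.1, by linarith [(hr h s a).2, hnext.2]⟩

lemma abs_Qval_sub_Val_le {π : ℕ → S → A → ℝ} (hP : ∀ h s a, P h s a ∈ stdSimplex ℝ S)
    (hr : ∀ h s a, r h s a ∈ Set.Icc 0 M) (hπ : ∀ h s, π h s ∈ stdSimplex ℝ A) (h : ℕ) (s : S)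
    (a : A) : |Qval H P r π h s a - Val H P r π h s| ≤ (H - h + 1 : ℕ) * M := by
  obtain ⟨hQ0, hQ1⟩ := Qval_mem_Icc hP hr hπ h s a
  obtain ⟨hV0, hV1⟩ := Val_mem_Icc (H := H) hP hr hπ h s
  have hM : (H + 1 - h : ℕ) * M ≤ (H - h + 1 : ℕ) * M :=
    mul_le_mul_of_nonneg_right (by gcongr; omega) ((hr 0 s a).1.trans (hr 0 s a).2)
  rw [abs_sub_le_iff]
  constructor <;> linarith

lemma Val_eq_sum_mul_Qval (π : ℕ → S → A → ℝ) {h : ℕ} (hh : h ≤ H) (s : S) :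
    Val H P r π h s = ∑ a, π h s a * Qval H P r π h s a := by
  simp only [Val, Qval, show H + 1 - h = H - h + 1 by omega,
    show H + 1 - (h + 1) = H - h by omega, valAux]

lemma sum_mul_Qval_sub_Val_eq_zero {π : ℕ → S → A → ℝ} {h : ℕ} (hh : h ≤ H) {s : S}
    (hπ : ∑ a, π h s a = 1) : ∑ a, π h s a * (Qval H P r π h s a - Val H P r π h s) = 0 := by
  rw [sum_mul_sub_const hπ, ← Val_eq_sum_mul_Qval π hh, sub_self]

lemma Val_succ_horizon (π : ℕ → S → A → ℝ) (s : S) : Val H P r π (H + 1) s = 0 := by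
  simp [Val, valAux]

lemma Val_sub_Val_eq (π π' : ℕ → S → A → ℝ) {h : ℕ} (hh : h ≤ H) (s : S) :
    Val H P r π h s - Val H P r π' h s =
      (∑ a, π h s a * Qval H P r π' h s a - Val H P r π' h s) +
        ∑ a, π h s a * ∑ s', P h s a s' * (Val H P r π (h + 1) s' - Val H P r π' (h + 1) s') := by
  rw [Val_eq_sum_mul_Qval π hh]
  simp only [Qval, mul_sub, sum_sub_distrib, mul_add, sum_add_distrib]
  ring

end Values

section Occupancy

variable [Fintype S] [Fintype A] [DecidableEq S] {P : ℕ → S → A → S → ℝ}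
  {π : ℕ → S → A → ℝ} {s₁ : S}

lemma sum_occup_succ_mul {h : ℕ} (hh : 1 ≤ h) (g : S → ℝ) :
    ∑ s', occup P π s₁ (h + 1) s' * g s' =
      ∑ s, occup P π s₁ h s * ∑ a, π h s a * ∑ s', P h s a s' * g s' := by
  obtain ⟨h, rfl⟩ := Nat.exists_eq_add_of_le' hh
  simp only [occup, sum_mul, mul_sum]
  rw [sum_comm]
  refine sum_congr rfl fun s _ => ?_
  rw [sum_comm]
  exact sum_congr rfl fun a _ => sum_congr rfl fun s' _ => by ring

lemma occup_mem_stdSimplex (hP : ∀ h s a, P h s a ∈ stdSimplex ℝ S)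
    (hπ : ∀ h s, π h s ∈ stdSimplex ℝ A) {h : ℕ} (hh : 1 ≤ h) :
    occup P π s₁ h ∈ stdSimplex ℝ S := by
  induction h, hh using Nat.le_induction with
  | base => exact ⟨fun s => by simp only [occup]; split_ifs <;> norm_num, by simp [occup]⟩
  | succ h hh ih =>
    obtain ⟨k, rfl⟩ := Nat.exists_eq_add_of_le' hh
    refine ⟨fun s' => ?_, ?_⟩
    · exact sum_nonneg fun s _ => sum_nonneg fun a _ =>
        mul_nonneg (mul_nonneg (ih.1 s) ((hπ _ s).1 a)) ((hP _ s a).1 s')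
    · have := sum_occup_succ_mul (P := P) (π := π) (s₁ := s₁) hh fun _ => 1
      simpa [(hP _ _ _).2, (hπ _ _).2, ih.2] using this

/-- The performance-difference lemma. -/
theorem Val_sub_Val_eq_sum_occup (H : ℕ) (r : ℕ → S → A → ℝ) (π' : ℕ → S → A → ℝ) :
    Val H P r π 1 s₁ - Val H P r π' 1 s₁ =
      ∑ j ∈ Icc 1 H, ∑ s, occup P π s₁ j s *
        (∑ a, π j s a * Qval H P r π' j s a - Val H P r π' j s) := by
  set D : ℕ → ℝ := fun j => ∑ s, occup P π s₁ j s * (Val H P r π j s - Val H P r π' j s)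
  have hstep : ∀ j ∈ Ico 1 (H + 1), D j - D (j + 1) = ∑ s, occup P π s₁ j s *
      (∑ a, π j s a * Qval H P r π' j s a - Val H P r π' j s) := by
    intro j hj
    obtain ⟨hj1, hjH⟩ := mem_Ico.mp hj
    simp only [D, sum_occup_succ_mul hj1, Val_sub_Val_eq π π' (Nat.lt_succ_iff.mp hjH), mul_add,
      sum_add_distrib, add_sub_cancel_right]
  have hD1 : D 1 = Val H P r π 1 s₁ - Val H P r π' 1 s₁ := by simp [D, occup]
  have hDH : D (H + 1) = 0 := by simp [D, Val_succ_horizon]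
  calc Val H P r π 1 s₁ - Val H P r π' 1 s₁ = D 1 - D (H + 1) := by rw [hD1, hDH, sub_zero]
    _ = ∑ j ∈ Ico 1 (H + 1), (D j - D (j + 1)) := by
      rw [← neg_sub, ← sum_Ico_sub (f := D) (by omega), ← sum_neg_distrib]
      simp only [neg_sub]
    _ = _ := by rw [sum_congr rfl hstep, Ico_add_one_right_eq_Icc]

end Occupancy

theorem olo_to_policy_general [Fintype S] [Fintype A]
    (H T : ℕ) (M B : ℝ) (hM : 0 < M) (s₁ : S)
    (P' : ℕ → S → A → S → ℝ)
    (hP0 : ∀ h s a s', 0 ≤ P' h s a s') (hP1 : ∀ h s a, ∑ s', P' h s a s' = 1)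
    (r' : ℕ → ℕ → S → A → ℝ) (hr : ∀ t h s a, r' t h s a ∈ Set.Icc 0 M)
    -- the OLO strategy: weights on actions, as a function of the reward sequence
    (w : (ℕ → A → ℝ) → ℕ → A → ℝ)
    (hw0 : ∀ g t a, 0 ≤ w g t a) (hw1 : ∀ g t, ∑ a, w g t a = 1)
    -- the OLO regret guarantee of Definition 1
    (hOLO : ∀ M' : ℝ, 0 < M' → ∀ g : ℕ → A → ℝ,
      (∀ t ∈ Finset.Icc 1 T, ∀ a, |g t a| ≤ M') →
      ∀ a, ∑ t ∈ Finset.Icc 1 T, g t a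
          - ∑ t ∈ Finset.Icc 1 T, ∑ a', w g t a' * g t a' ≤ 2 * M' * B)
    -- the policies are produced by running the strategy on estimated advantages
    (π' : ℕ → ℕ → S → A → ℝ)
    (hπ'def : ∀ t h s a, π' t h s a =
      w (fun τ a' => Qval H P' (r' τ) (π' τ) h s a' - Val H P' (r' τ) (π' τ) h s) t a)
    -- the fixed comparator policy
    (π : ℕ → S → A → ℝ)
    (hπ0 : ∀ h s a, 0 ≤ π h s a) (hπ1 : ∀ h s, ∑ a, π h s a = 1) :
    ∑ t ∈ Finset.Icc 1 T,
        (Val H P' (r' t) π 1 s₁ - Val H P' (r' t) (π' t) 1 s₁)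
      ≤ 2 * M * H ^ 2 * B := by
  classical
  have hP : ∀ h s a, P' h s a ∈ stdSimplex ℝ S := fun h s a => ⟨hP0 h s a, hP1 h s a⟩
  have hπ : ∀ h s, π h s ∈ stdSimplex ℝ A := fun h s => ⟨hπ0 h s, hπ1 h s⟩
  have hπ' : ∀ t h s, π' t h s ∈ stdSimplex ℝ A := fun t h s =>
    ⟨fun a => hπ'def t h s a ▸ hw0 _ _ _, by simp only [hπ'def]; exact hw1 _ _⟩
  have hstate : ∀ j ∈ Icc 1 H, ∀ s, ∑ t ∈ Icc 1 T,
      (∑ a, π j s a * Qval H P' (r' t) (π' t) j s a - Val H P' (r' t) (π' t) j s) ≤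
        2 * (M * H) * B := by
    intro j hj s
    obtain ⟨hj1, hjH⟩ := mem_Icc.mp hj
    have hadv : ∀ t ∈ Icc 1 T, ∀ a,
        |Qval H P' (r' t) (π' t) j s a - Val H P' (r' t) (π' t) j s| ≤ M * H := fun t _ a =>
      (abs_Qval_sub_Val_le hP (hr t) (hπ' t) j s a).trans <| by
        rw [mul_comm]; gcongr; omega
    have hreg := hOLO (M * H) (mul_pos hM (by exact_mod_cast hj1.trans hjH)) _ hadv
    simp only [← hπ'def, sum_mul_Qval_sub_Val_eq_zero hjH (hπ' _ j s).2, sum_const_zero,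
      sub_zero] at hreg
    rw [sum_congr rfl fun t _ => (sum_mul_sub_const (hπ j s).2 _ _).symm]
    exact sum_sum_mul_le_of_mem_stdSimplex (hπ j s) hreg
  calc ∑ t ∈ Icc 1 T, (Val H P' (r' t) π 1 s₁ - Val H P' (r' t) (π' t) 1 s₁)
      = ∑ j ∈ Icc 1 H, ∑ s, occup P' π s₁ j s * ∑ t ∈ Icc 1 T,
          (∑ a, π j s a * Qval H P' (r' t) (π' t) j s a - Val H P' (r' t) (π' t) j s) := by
        simp only [Val_sub_Val_eq_sum_occup, mul_sum]
        rw [sum_comm]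
        exact sum_congr rfl fun j _ => sum_comm
    _ ≤ ∑ j ∈ Icc 1 H, 2 * (M * H) * B := sum_le_sum fun j hj =>
        sum_mul_le_of_mem_stdSimplex (occup_mem_stdSimplex hP hπ (mem_Icc.mp hj).1) (hstate j hj)
    _ = 2 * M * H ^ 2 * B := by simp; ring

/-- OLO-to-policy regret conversion: if an OLO strategy (given by weights `w`) guarantees
regret at most 2M'·B against the best fixed action for reward vectors bounded by M', and
the policies π'_t are obtained by running this strategy at each state–stage pair on the
advantage functions of the previously played policies, then for every fixed policy π,
∑_{t=1}^T ( V₁^{π,r'_t,P'}(s₁) − V₁^{π'_t,r'_t,P'}(s₁) ) ≤ 2 M H² B. -/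
theorem olo_to_policy [Fintype S] [Fintype A]
    (H T : ℕ) (hH : 1 ≤ H) (M B : ℝ) (hM : 0 < M) (s₁ : S)
    (P' : ℕ → S → A → S → ℝ)
    (hP0 : ∀ h s a s', 0 ≤ P' h s a s') (hP1 : ∀ h s a, ∑ s', P' h s a s' = 1)
    (r' : ℕ → ℕ → S → A → ℝ) (hr : ∀ t h s a, r' t h s a ∈ Set.Icc 0 M)
    -- the OLO strategy: weights on actions, as a function of the reward sequence
    (w : (ℕ → A → ℝ) → ℕ → A → ℝ)
    (hw0 : ∀ g t a, 0 ≤ w g t a) (hw1 : ∀ g t, ∑ a, w g t a = 1)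
    -- the OLO regret guarantee of Definition 1
    (hOLO : ∀ M' : ℝ, 0 < M' → ∀ g : ℕ → A → ℝ,
      (∀ t ∈ Finset.Icc 1 T, ∀ a, |g t a| ≤ M') →
      ∀ a, ∑ t ∈ Finset.Icc 1 T, g t a
          - ∑ t ∈ Finset.Icc 1 T, ∑ a', w g t a' * g t a' ≤ 2 * M' * B)
    -- the policies are produced by running the strategy on estimated advantages
    (π' : ℕ → ℕ → S → A → ℝ)
    (hπ'def : ∀ t h s a, π' t h s a =
      w (fun τ a' => Qval H P' (r' τ) (π' τ) h s a' - Val H P' (r' τ) (π' τ) h s) t a)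
    -- the fixed comparator policy
    (π : ℕ → S → A → ℝ)
    (hπ0 : ∀ h s a, 0 ≤ π h s a) (hπ1 : ∀ h s, ∑ a, π h s a = 1) :
    ∑ t ∈ Finset.Icc 1 T,
        (Val H P' (r' t) π 1 s₁ - Val H P' (r' t) (π' t) 1 s₁)
      ≤ 2 * M * H ^ 2 * B :=
  olo_to_policy_general H T M B hM s₁ P' hP0 hP1 r' hr w hw0 hw1 hOLO π' hπ'def π hπ0 hπ1
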